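/- Let i ∈ ℂ be a primitive fourth root of unity (i² = −1). Let V be a 4-dimensional ℂ-vector space and let f be an endomorphism of V whose matrix in some basis of V is diag(J(i,2), J(−i,2)). Then there is a basis of the 6-dimensional space ⋀²V in which the induced endomorphism ⋀²f has matrix diag(J(1,3), J(1,1), J(−1,1), J(−1,1)). -/

import Mathlib

/-- The `n × n` Jordan block with eigenvalue `lam`: every diagonal entry is `lam` and every
entry directly above the diagonal is `1`. -/
def jordanBlock (lam : ℂ) (n : ℕ) : Matrix (Fin n) (Fin n) ℂ :=
  Matrix.of fun i j : Fin n =>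
    if (j : ℕ) = (i : ℕ) then lam else if (j : ℕ) = (i : ℕ) + 1 then 1 else 0

/-- The wedge `v ∧ w` as an element of the second exterior power `⋀[ℂ]^2 V`. -/
def wedge {V : Type*} [AddCommGroup V] [Module ℂ V] (v w : V) : ⋀[ℂ]^2 V :=
  ⟨ExteriorAlgebra.ι ℂ v * ExteriorAlgebra.ι ℂ w, by
    show _ ∈ LinearMap.range (ExteriorAlgebra.ι ℂ (M := V)) ^ 2
    rw [pow_two]
    exact Submodule.mul_mem_mul (LinearMap.mem_range_self _ v) (LinearMap.mem_range_self _ w)⟩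

/-!
Write `e₁, e₂, e₃, e₄` for the basis, so `f e₁ = i e₁`, `f e₂ = e₁ + i e₂`, `f e₃ = -i e₃` and
`f e₄ = e₃ - i e₄`. Then `e₁ ∧ e₂` and `e₃ ∧ e₄` are eigenvectors of `⋀²f` for `i² = (-i)² = -1`.
On the span of the mixed wedges `e_a ∧ e_b` (`a ∈ {1,2}`, `b ∈ {3,4}`) the map `⋀²f - 1` is
nilpotent, with `(⋀²f - 1)² (e₂ ∧ e₄) = 2 e₁ ∧ e₃ ≠ 0`: this gives a Jordan chain of length three,
completed by the eigenvector `e₁ ∧ e₄ + e₂ ∧ e₃`. The six vectors span `⋀²V`, whose dimension is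
`C(4,2) = 6`, so they form a basis.
-/

open ExteriorAlgebra Module Submodule Set

section Wedge

variable {V : Type*} [AddCommGroup V] [Module ℂ V]

@[simp] lemma coe_wedge (v w : V) : (wedge v w : ExteriorAlgebra ℂ V) = ι ℂ v * ι ℂ w := rfl

lemma wedge_add_left (v v' w : V) : wedge (v + v') w = wedge v w + wedge v' w :=
  Subtype.ext <| by simp [add_mul]

lemma wedge_add_right (v w w' : V) : wedge v (w + w') = wedge v w + wedge v w' :=
  Subtype.ext <| by simp [mul_add]

lemma wedge_smul_left (a : ℂ) (v w : V) : wedge (a • v) w = a • wedge v w :=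
  Subtype.ext <| by simp

lemma wedge_smul_right (a : ℂ) (v w : V) : wedge v (a • w) = a • wedge v w :=
  Subtype.ext <| by simp

@[simp] lemma wedge_self (v : V) : wedge v v = 0 :=
  Subtype.ext <| by simp

lemma wedge_swap (v w : V) : wedge w v = -wedge v w :=
  Subtype.ext <| eq_neg_of_add_eq_zero_left (ι_add_mul_swap w v)

lemma ιMulti_two_eq_wedge (v : Fin 2 → V) : exteriorPower.ιMulti ℂ 2 v = wedge (v 0) (v 1) :=
  Subtype.ext <| by simp [ιMulti_apply, Matrix.vecTail]

lemma span_wedge_basis_eq_top {ι : Type*} (b : Basis ι ℂ V) :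
    span ℂ (range fun p : ι × ι => wedge (b p.1) (b p.2)) = ⊤ := by
  refine eq_top_iff.mpr <|
    (exteriorPower.ιMulti_span_of_span ℂ 2 V b.span_eq).ge.trans (span_mono ?_)
  rintro _ ⟨v, hv, rfl⟩
  obtain ⟨⟨j₀, hj₀⟩, ⟨j₁, hj₁⟩⟩ := And.intro (hv ⟨0, rfl⟩) (hv ⟨1, rfl⟩)
  exact ⟨(j₀, j₁), by simp [ιMulti_two_eq_wedge, hj₀, hj₁]⟩

end Wedge

section JordanWedgeFamily

variable {V : Type*} [AddCommGroup V] [Module ℂ V]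

/-- When `f` acts on `e₁, e₂, e₃, e₄` by `J(i,2)` and `J(-i,2)` and `g = ⋀²f`, the first three
vectors form the Jordan chain `(g - 1)² u, (g - 1) u, u` of `u = e₂ ∧ e₄`, the fourth is a further
eigenvector for `i · (-i) = 1`, and the last two are eigenvectors for `i² = (-i)² = -1`. -/
def jordanWedgeFamily (i : ℂ) (e₁ e₂ e₃ e₄ : V) :
    Fin 3 ⊕ (Fin 1 ⊕ (Fin 1 ⊕ Fin 1)) → ⋀[ℂ]^2 V :=
  Sum.elim ![(2 : ℂ) • wedge e₁ e₃, wedge e₁ e₃ + i • (wedge e₂ e₃ - wedge e₁ e₄), wedge e₂ e₄]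
    (Sum.elim ![wedge e₁ e₄ + wedge e₂ e₃] (Sum.elim ![wedge e₁ e₂] ![wedge e₃ e₄]))

lemma jordanWedgeFamily_chain {i : ℂ} (hi : i ^ 2 = -1) {f : V →ₗ[ℂ] V}
    {g : ⋀[ℂ]^2 V →ₗ[ℂ] ⋀[ℂ]^2 V} (hg : ∀ v w : V, g (wedge v w) = wedge (f v) (f w))
    {e₁ e₂ e₃ e₄ : V} (h₁ : f e₁ = i • e₁) (h₂ : f e₂ = e₁ + i • e₂) (h₃ : f e₃ = (-i) • e₃)
    (h₄ : f e₄ = e₃ + (-i) • e₄) :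
    let v := jordanWedgeFamily i e₁ e₂ e₃ e₄
    g (v (.inl 0)) = v (.inl 0) ∧ g (v (.inl 1)) = v (.inl 0) + v (.inl 1) ∧
      g (v (.inl 2)) = v (.inl 1) + v (.inl 2) ∧ g (v (.inr (.inl 0))) = v (.inr (.inl 0)) ∧
      g (v (.inr (.inr (.inl 0)))) = -v (.inr (.inr (.inl 0))) ∧
      g (v (.inr (.inr (.inr 0)))) = -v (.inr (.inr (.inr 0))) := by
  refine ⟨?_, ?_, ?_, ?_, ?_, ?_⟩ <;>
    simp only [jordanWedgeFamily, Sum.elim_inl, Sum.elim_inr, Matrix.cons_val, map_add, map_sub,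
      map_smul, hg, h₁, h₂, h₃, h₄, wedge_add_left, wedge_add_right, wedge_smul_left,
      wedge_smul_right, wedge_self, smul_zero, zero_add] <;>
    match_scalars <;> grind

lemma wedge_mem_of_jordanWedgeFamily_mem {i : ℂ} (hi : i ≠ 0) {e₁ e₂ e₃ e₄ : V}
    {P : Submodule ℂ (⋀[ℂ]^2 V)} (hP : ∀ k, jordanWedgeFamily i e₁ e₂ e₃ e₄ k ∈ P) :
    wedge e₁ e₂ ∈ P ∧ wedge e₁ e₃ ∈ P ∧ wedge e₁ e₄ ∈ P ∧ wedge e₂ e₃ ∈ P ∧ wedge e₂ e₄ ∈ P ∧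
      wedge e₃ e₄ ∈ P := by
  have h₁₃ : wedge e₁ e₃ ∈ P := by
    simpa [jordanWedgeFamily, smul_smul] using P.smul_mem (2⁻¹ : ℂ) (hP (.inl 0))
  have hsum : wedge e₁ e₄ + wedge e₂ e₃ ∈ P := hP (.inr (.inl 0))
  have hdiff : wedge e₂ e₃ - wedge e₁ e₄ ∈ P := by
    simpa [jordanWedgeFamily, smul_smul, hi] using
      P.smul_mem i⁻¹ (P.sub_mem (hP (.inl 1)) h₁₃)
  refine ⟨hP (.inr (.inr (.inl 0))), h₁₃, ?_, ?_, hP (.inl 2), hP (.inr (.inr (.inr 0)))⟩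
  · convert P.smul_mem (2⁻¹ : ℂ) (P.sub_mem hsum hdiff) using 1
    module
  · convert P.smul_mem (2⁻¹ : ℂ) (P.add_mem hsum hdiff) using 1
    module

lemma top_le_span_jordanWedgeFamily {i : ℂ} (hi : i ≠ 0) (B : Basis (Fin 2 ⊕ Fin 2) ℂ V) :
    ⊤ ≤ span ℂ (range (jordanWedgeFamily i (B (.inl 0)) (B (.inl 1)) (B (.inr 0))
      (B (.inr 1)))) := by
  set v := jordanWedgeFamily i (B (.inl 0)) (B (.inl 1)) (B (.inr 0)) (B (.inr 1))
  obtain ⟨h₁₂, h₁₃, h₁₄, h₂₃, h₂₄, h₃₄⟩ :=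
    wedge_mem_of_jordanWedgeFamily_mem hi (P := span ℂ (range v)) (subset_span <| mem_range_self ·)
  rw [← span_wedge_basis_eq_top B, span_le]
  rintro _ ⟨⟨a | a, c | c⟩, rfl⟩ <;> fin_cases a <;> fin_cases c <;> dsimp only <;>
    first
      | (rw [wedge_self]; exact zero_mem _)
      | assumption
      | (rw [wedge_swap]; exact neg_mem ‹_›)

end JordanWedgeFamily

section Matrices

variable {W : Type*} [AddCommGroup W] [Module ℂ W]

lemma apply_basis_of_toMatrix_eq_fromBlocks_jordanBlock {a b : ℂ} {f : W →ₗ[ℂ] W}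
    {B : Basis (Fin 2 ⊕ Fin 2) ℂ W}
    (hB : LinearMap.toMatrix B B f = Matrix.fromBlocks (jordanBlock a 2) 0 0 (jordanBlock b 2)) :
    f (B (.inl 0)) = a • B (.inl 0) ∧ f (B (.inl 1)) = B (.inl 0) + a • B (.inl 1) ∧
      f (B (.inr 0)) = b • B (.inr 0) ∧ f (B (.inr 1)) = B (.inr 0) + b • B (.inr 1) := by
  have hf j : f (B j) = ∑ k, LinearMap.toMatrix B B f k j • B k := by
    conv_lhs => rw [← Matrix.toLin_toMatrix B B f]
    exact Matrix.toLin_self _ _ _ _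
  refine ⟨?_, ?_, ?_, ?_⟩ <;>
    simp [hf, hB, Fintype.sum_sum_type, Fin.sum_univ_two, jordanBlock, Matrix.fromBlocks]

lemma toMatrix_eq_fromBlocks_jordanBlock {g : W →ₗ[ℂ] W}
    (C : Basis (Fin 3 ⊕ (Fin 1 ⊕ (Fin 1 ⊕ Fin 1))) ℂ W)
    (h₀ : g (C (.inl 0)) = C (.inl 0)) (h₁ : g (C (.inl 1)) = C (.inl 0) + C (.inl 1))
    (h₂ : g (C (.inl 2)) = C (.inl 1) + C (.inl 2)) (h₃ : g (C (.inr (.inl 0))) = C (.inr (.inl 0)))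
    (h₄ : g (C (.inr (.inr (.inl 0)))) = -C (.inr (.inr (.inl 0))))
    (h₅ : g (C (.inr (.inr (.inr 0)))) = -C (.inr (.inr (.inr 0)))) :
    LinearMap.toMatrix C C g = Matrix.fromBlocks (jordanBlock 1 3) 0 0
      (Matrix.fromBlocks (jordanBlock 1 1) 0 0
        (Matrix.fromBlocks (jordanBlock (-1) 1) 0 0 (jordanBlock (-1) 1))) := by
  rw [← LinearMap.toMatrix_toLin C C (Matrix.fromBlocks _ _ _ _)]
  congr 1
  refine C.ext fun k => ?_
  rw [Matrix.toLin_self]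
  rcases k with k | k | k | k <;> fin_cases k <;>
    simp [h₀, h₁, h₂, h₃, h₄, h₅, Fintype.sum_sum_type, Fin.sum_univ_three, jordanBlock,
      Matrix.fromBlocks]

end Matrices

/-- Let `i ∈ ℂ` be a primitive fourth root of unity (`i² = −1`). If the matrix of the endomorphism `f` of the 4-dimensional ℂ-vector space `V` in some basis is diag(J(i,2), J(−i,2)), then in some basis of the 6-dimensional space ⋀²V the induced endomorphism ⋀²f (characterized by `v ∧ w ↦ f v ∧ f w`) has matrix diag(J(1,3), J(1,1), J(−1,1), J(−1,1)). -/
theorem exterior_square_jordan_Ji2_Jmi2 (V : Type*) [AddCommGroup V] [Module ℂ V]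
    (hdim : Module.finrank ℂ V = 4)
    (i : ℂ) (hi : i ^ 2 = -1)
    (f : V →ₗ[ℂ] V)
    (B : Module.Basis (Fin 2 ⊕ Fin 2) ℂ V)
    (hB : LinearMap.toMatrix B B f = Matrix.fromBlocks (jordanBlock i 2) 0 0 (jordanBlock (-i) 2))
    (g : (⋀[ℂ]^2 V) →ₗ[ℂ] (⋀[ℂ]^2 V))
    (hg : ∀ v w : V, g (wedge v w) = wedge (f v) (f w)) :
    ∃ C : Module.Basis (Fin 3 ⊕ (Fin 1 ⊕ (Fin 1 ⊕ Fin 1))) ℂ (⋀[ℂ]^2 V),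
      LinearMap.toMatrix C C g = Matrix.fromBlocks (jordanBlock 1 3) 0 0 (Matrix.fromBlocks (jordanBlock 1 1) 0 0 (Matrix.fromBlocks (jordanBlock (-1) 1) 0 0 (jordanBlock (-1) 1))) := by
  have : Module.Finite ℂ V := Module.finite_of_finrank_eq_succ hdim
  have hi₀ : i ≠ 0 := by rintro rfl; norm_num at hi
  obtain ⟨hf₁, hf₂, hf₃, hf₄⟩ := apply_basis_of_toMatrix_eq_fromBlocks_jordanBlock hB
  have hcard : Fintype.card (Fin 3 ⊕ (Fin 1 ⊕ (Fin 1 ⊕ Fin 1))) = finrank ℂ (⋀[ℂ]^2 V) := by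
    rw [exteriorPower.finrank_eq, hdim]
    rfl
  let C := basisOfTopLeSpanOfCardEqFinrank _ (top_le_span_jordanWedgeFamily hi₀ B) hcard
  obtain ⟨h₀, h₁, h₂, h₃, h₄, h₅⟩ := jordanWedgeFamily_chain hi hg hf₁ hf₂ hf₃ hf₄
  have hC : ⇑C = _ := coe_basisOfTopLeSpanOfCardEqFinrank _ _ _
  exact ⟨C, toMatrix_eq_fromBlocks_jordanBlock C (hC ▸ h₀) (hC ▸ h₁) (hC ▸ h₂) (hC ▸ h₃)
    (hC ▸ h₄) (hC ▸ h₅)⟩
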